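/- Let (X, Y) be a complete coresolving cotorsion pair in an abelian category A and set ω := X ∩ Y. Then for every object A of A one has: A ∈ Y if and only if every morphism f : X → A with X ∈ X factors through some object of ω. -/

import Mathlib

/-!
If `A ∈ Y` and `X' ∈ X`, embed `X'` into some `I ∈ Y` with cokernel in `X`: then `I ∈ ω`, as `X`
is closed under extensions, and `f` extends to `I` because `Ext¹(X, A) = 0`.

Conversely, take `0 → Y' → X' → A → 0` with `X' ∈ X`, `Y' ∈ Y` and factor `g : X' ⟶ A` as
`u ≫ v` with `v : W ⟶ A`, `W ∈ ω`; then `v` is epi. For `D ∈ X` we have `Ext¹(D, W) = 0`, so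
`Ext¹(D, ker v)` is the cokernel of `Hom(D, W) → Hom(D, A)`, and this map is onto because every
`D ⟶ A` lifts along `g` (as `Ext¹(D, Y') = 0`). Hence `ker v ∈ Y`, and `A ∈ Y` since `Y` is
coresolving.
-/

open CategoryTheory CategoryTheory.Limits CategoryTheory.Abelian

universe w v u

variable {C : Type u} [Category.{v} C] [Abelian C]

/-- `f : X ⟶ Y` and `g : Y ⟶ Z` form a short exact sequence `0 → X → Y → Z → 0`. -/
def IsShortExactSeq {X Y Z : C} (f : X ⟶ Y) (g : Y ⟶ Z) : Prop :=
  ∃ zero : f ≫ g = 0, (ShortComplex.mk f g zero).ShortExact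

/-- `(D, E)` is a cotorsion pair: each class is the `Ext¹`-orthogonal of the other. -/
def IsCotorsionPair [HasExt.{w} C] (D E : Set C) : Prop :=
  (∀ X : C, X ∈ D ↔ ∀ Y ∈ E, Subsingleton (Ext.{w} X Y 1)) ∧
  (∀ Y : C, Y ∈ E ↔ ∀ X ∈ D, Subsingleton (Ext.{w} X Y 1))

/-- `(D, E)` is a complete cotorsion pair. -/
def IsCompleteCotorsionPair [HasExt.{w} C] (D E : Set C) : Prop :=
  IsCotorsionPair.{w} D E ∧
  (∀ Z : C, ∃ (X Y : C) (f : Y ⟶ X) (g : X ⟶ Z), IsShortExactSeq f g ∧ X ∈ D ∧ Y ∈ E) ∧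
  (∀ Z : C, ∃ (Y X : C) (f : Z ⟶ Y) (g : Y ⟶ X), IsShortExactSeq f g ∧ Y ∈ E ∧ X ∈ D)

/-- A cotorsion pair `(D, E)` is coresolving if `E` is closed under cokernels of
monomorphisms. -/
def IsCoresolving (E : Set C) : Prop :=
  ∀ ⦃E₁ E₂ Z : C⦄ (f : E₁ ⟶ E₂) (g : E₂ ⟶ Z),
    IsShortExactSeq f g → E₁ ∈ E → E₂ ∈ E → Z ∈ E

/-- A morphism factors through some object of the class `ω`. -/
def FactorsThroughClass (ω : Set C) {A B : C} (f : A ⟶ B) : Prop :=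
  ∃ (I : C) (u : A ⟶ I) (v : I ⟶ B), I ∈ ω ∧ u ≫ v = f

namespace CategoryTheory.ShortComplex.ShortExact

variable [HasExt.{w} C] {S : ShortComplex C} (hS : S.ShortExact)
include hS

lemma surjective_f_comp_of_subsingleton_ext (A : C) (h : Subsingleton (Ext.{w} S.X₃ A 1)) :
    Function.Surjective fun ψ : S.X₂ ⟶ A => S.f ≫ ψ := by
  intro φ
  obtain ⟨x, hx⟩ := Ext.contravariant_sequence_exact₁ hS A (Ext.mk₀ φ) (add_zero 1)
    (Subsingleton.elim _ _)
  obtain ⟨ψ, rfl⟩ := (Ext.mk₀_bijective _ _).2 x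
  exact ⟨ψ, (Ext.mk₀_bijective _ _).1 (by rwa [Ext.mk₀_comp_mk₀] at hx)⟩

lemma surjective_comp_g_of_subsingleton_ext (D : C) (h : Subsingleton (Ext.{w} D S.X₁ 1)) :
    Function.Surjective fun φ : D ⟶ S.X₂ => φ ≫ S.g := by
  intro ψ
  obtain ⟨x, hx⟩ := Ext.covariant_sequence_exact₃ D hS (Ext.mk₀ ψ) (zero_add 1)
    (Subsingleton.elim _ _)
  obtain ⟨φ, rfl⟩ := (Ext.mk₀_bijective _ _).2 x
  exact ⟨φ, (Ext.mk₀_bijective _ _).1 (by rwa [Ext.mk₀_comp_mk₀] at hx)⟩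

lemma subsingleton_ext_X₂ (Y : C) (h₁ : Subsingleton (Ext.{w} S.X₁ Y 1))
    (h₃ : Subsingleton (Ext.{w} S.X₃ Y 1)) : Subsingleton (Ext.{w} S.X₂ Y 1) := by
  refine subsingleton_of_forall_eq 0 fun x => ?_
  obtain ⟨x₃, rfl⟩ := Ext.contravariant_sequence_exact₂ hS Y x (Subsingleton.elim _ _)
  rw [Subsingleton.elim x₃ 0, Ext.comp_zero]

lemma subsingleton_ext_X₁_of_surjective_comp_g (D : C) (h₂ : Subsingleton (Ext.{w} D S.X₂ 1))
    (hg : Function.Surjective fun φ : D ⟶ S.X₂ => φ ≫ S.g) :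
    Subsingleton (Ext.{w} D S.X₁ 1) := by
  refine subsingleton_of_forall_eq 0 fun x => ?_
  obtain ⟨x₃, rfl⟩ := Ext.covariant_sequence_exact₁ D hS x (Subsingleton.elim _ _) (zero_add 1)
  obtain ⟨ψ, rfl⟩ := (Ext.mk₀_bijective _ _).2 x₃
  obtain ⟨φ, rfl⟩ := hg ψ
  rw [← Ext.mk₀_comp_mk₀, Ext.comp_assoc_of_second_deg_zero, hS.comp_extClass, Ext.comp_zero]

end CategoryTheory.ShortComplex.ShortExact

lemma CategoryTheory.ShortComplex.kernelSequence_shortExact {X Y : C} (f : X ⟶ Y) [Epi f] :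
    (kernelSequence f).ShortExact :=
  { exact := kernelSequence_exact f, epi_g := ‹Epi f› }

namespace IsCotorsionPair

variable [HasExt.{w} C] {D E : Set C} (hp : IsCotorsionPair.{w} D E)
include hp

lemma subsingleton_ext {X Y : C} (hX : X ∈ D) (hY : Y ∈ E) : Subsingleton (Ext.{w} X Y 1) :=
  (hp.1 X).1 hX Y hY

lemma mem_left_of_shortExact {S : ShortComplex C} (hS : S.ShortExact) (h₁ : S.X₁ ∈ D)
    (h₃ : S.X₃ ∈ D) : S.X₂ ∈ D :=
  (hp.1 S.X₂).2 fun Y hY =>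
    hS.subsingleton_ext_X₂ Y (hp.subsingleton_ext h₁ hY) (hp.subsingleton_ext h₃ hY)

lemma kernel_mem_right_of_fac {S : ShortComplex C} (hS : S.ShortExact) (hS₁ : S.X₁ ∈ E)
    {W : C} (hW : W ∈ E) (u : S.X₂ ⟶ W) (v : W ⟶ S.X₃) [Epi v] (huv : u ≫ v = S.g) :
    kernel v ∈ E := by
  refine (hp.2 _).2 fun X hX => (ShortComplex.kernelSequence_shortExact v)
    |>.subsingleton_ext_X₁_of_surjective_comp_g X (hp.subsingleton_ext hX hW) fun ψ => ?_
  obtain ⟨φ, rfl⟩ := hS.surjective_comp_g_of_subsingleton_ext X (hp.subsingleton_ext hX hS₁) ψ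
  exact ⟨φ ≫ u, show (φ ≫ u) ≫ v = φ ≫ S.g by rw [Category.assoc, huv]⟩

end IsCotorsionPair

namespace IsCompleteCotorsionPair

variable [HasExt.{w} C] {D E : Set C} (hp : IsCompleteCotorsionPair.{w} D E)
include hp

lemma factorsThroughClass_of_mem_right {X A : C} (hX : X ∈ D) (hA : A ∈ E) (f : X ⟶ A) :
    FactorsThroughClass (D ∩ E) f := by
  obtain ⟨I, X₁, k, _, ⟨_, hS⟩, hI, hX₁⟩ := hp.2.2 X
  have hID : I ∈ D := hp.1.mem_left_of_shortExact hS hX hX₁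
  obtain ⟨ψ, hψ⟩ := hS.surjective_f_comp_of_subsingleton_ext A (hp.1.subsingleton_ext hX₁ hA) f
  exact ⟨I, k, ψ, ⟨hID, hI⟩, hψ⟩

lemma mem_right_of_forall_factorsThroughClass (hcores : IsCoresolving E) {A : C}
    (hA : ∀ X ∈ D, ∀ f : X ⟶ A, FactorsThroughClass E f) : A ∈ E := by
  obtain ⟨X, Y, _, g, ⟨_, hS⟩, hX, hY⟩ := hp.2.1 A
  obtain ⟨W, u, v, hW, huv⟩ := hA X hX g
  have := hS.epi_g
  have : Epi v := epi_of_epi_fac huv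
  exact hcores _ _ ⟨_, ShortComplex.kernelSequence_shortExact v⟩
    (hp.1.kernel_mem_right_of_fac hS hY hW u v huv) hW

end IsCompleteCotorsionPair

/-- Let `(X, Y)` be a complete coresolving cotorsion pair and
`ω := X ∩ Y`. Then `A ∈ Y` iff every morphism `X ⟶ A` with `X ∈ X` factors through `ω`. -/
theorem stmt3 [HasExt.{w} C] (X Y : Set C)
    (hpair : IsCompleteCotorsionPair.{w} X Y) (hcores : IsCoresolving Y) (A : C) :
    A ∈ Y ↔ ∀ (X' : C), X' ∈ X → ∀ f : X' ⟶ A, FactorsThroughClass (X ∩ Y) f :=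
  ⟨fun hA _ hX' f => hpair.factorsThroughClass_of_mem_right hX' hA f,
    fun h => hpair.mem_right_of_forall_factorsThroughClass hcores fun X' hX' f =>
      let ⟨I, u, v, hI, huv⟩ := h X' hX' f
      ⟨I, u, v, hI.2, huv⟩⟩
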